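/- arXiv:1803.04660 — 3 statements merged into one kernel-verified Lean document; each statement's English description precedes it below -/
import Mathlib

section
/- Let G be a finite connected simple graph and let U⪯ be the set of vertices x whose only tight upper certificate is x itself (i.e., the maximal elements of the relation u ⪯ x ⇔ e(u) = d(u,x) + e(x)). Then (1) U⪯ is a tight upper certificate of G, i.e., for every vertex u there exists x ∈ U⪯ with e(u) = d(u,x) + e(x), and (2) U⪯ is contained in every tight upper certificate of G; hence U⪯ is the unique tight upper certificate of minimum size. -/
/-! The relation `u ⪯ x :⇔ e(u) = d(u, x) + e(x)` is transitive by the triangle inequality, and a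
step `u ⪯ x` with `x ≠ u` strictly decreases the eccentricity. Following such steps from `u`
therefore ends, after finitely many of them, at a `⪯`-maximal vertex certifying `u`. Conversely a
maximal vertex `x` can only be certified by itself, so it lies in every tight upper certificate. -/

/-- The eccentricity of a vertex `u`: the maximum shortest-path distance from `u`. -/
noncomputable def graphEcc {V : Type*} [Fintype V] (G : SimpleGraph V) (u : V) : ℕ :=
  Finset.univ.sup (G.dist u)

section

variable {V : Type*} [Fintype V] {G : SimpleGraph V}

def IsTightUpperCertificate (G : SimpleGraph V) (u x : V) : Prop :=
  graphEcc G u = G.dist u x + graphEcc G x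

lemma graphEcc_le_dist_add (hG : G.Connected) (u y : V) :
    graphEcc G u ≤ G.dist u y + graphEcc G y :=
  Finset.sup_le fun v _ =>
    hG.dist_triangle.trans (Nat.add_le_add_left (Finset.le_sup (Finset.mem_univ v)) _)

namespace IsTightUpperCertificate

lemma refl (u : V) : IsTightUpperCertificate G u u := by
  simp [IsTightUpperCertificate]

lemma trans (hG : G.Connected) {u x y : V} (hux : IsTightUpperCertificate G u x)
    (hxy : IsTightUpperCertificate G x y) : IsTightUpperCertificate G u y := by
  have htri : G.dist u y ≤ G.dist u x + G.dist x y := hG.dist_triangle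
  have hle := graphEcc_le_dist_add hG u y
  unfold IsTightUpperCertificate at *
  omega

lemma graphEcc_lt (hG : G.Connected) {x y : V} (hxy : IsTightUpperCertificate G x y)
    (hne : y ≠ x) : graphEcc G y < graphEcc G x := by
  have hpos := hG.pos_dist_of_ne hne.symm
  unfold IsTightUpperCertificate at hxy
  omega

end IsTightUpperCertificate

lemma exists_maximal_isTightUpperCertificate (hG : G.Connected) (u : V) :
    ∃ x, IsTightUpperCertificate G u x ∧ ∀ y, IsTightUpperCertificate G x y → y = x := by
  induction hu : graphEcc G u using Nat.strong_induction_on generalizing u with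
  | _ n ih =>
  by_cases hmax : ∀ y, IsTightUpperCertificate G u y → y = u
  · exact ⟨u, .refl u, hmax⟩
  push Not at hmax
  obtain ⟨y, huy, hyu⟩ := hmax
  obtain ⟨x, hyx, hx⟩ := ih _ (hu ▸ huy.graphEcc_lt hG hyu) y rfl
  exact ⟨x, huy.trans hG hyx, hx⟩

end

theorem optimal_tight_upper_certificate {V : Type*} [Fintype V] (G : SimpleGraph V)
    (hG : G.Connected)
    (UOpt : Set V)
    (hUOpt : UOpt = {x : V | ∀ y : V, graphEcc G x = G.dist x y + graphEcc G y → y = x}) :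
    (∀ u : V, ∃ x ∈ UOpt, graphEcc G u = G.dist u x + graphEcc G x) ∧
    (∀ U : Set V, (∀ u : V, ∃ x ∈ U, graphEcc G u = G.dist u x + graphEcc G x) →
      UOpt ⊆ U) ∧
    (∀ U : Set V, (∀ u : V, ∃ x ∈ U, graphEcc G u = G.dist u x + graphEcc G x) →
      UOpt.ncard ≤ U.ncard ∧ (U.ncard = UOpt.ncard → U = UOpt)) := by
  subst hUOpt
  have hsubset : ∀ U : Set V, (∀ u : V, ∃ x ∈ U, graphEcc G u = G.dist u x + graphEcc G x) →
      {x : V | ∀ y : V, graphEcc G x = G.dist x y + graphEcc G y → y = x} ⊆ U := by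
    intro U hU x hx
    obtain ⟨y, hyU, hxy⟩ := hU x
    rwa [← hx y hxy]
  refine ⟨fun u => ?_, hsubset, fun U hU => ?_⟩
  · obtain ⟨x, hux, hx⟩ := exists_maximal_isTightUpperCertificate hG u
    exact ⟨x, hx, hux⟩
  · have hsub := hsubset U hU
    exact ⟨Set.ncard_le_ncard hsub, fun h => (Set.eq_of_subset_of_ncard_le hsub h.le).symm⟩
end

section
/- Let G be a finite connected δ-hyperbolic simple graph. Then diam(G) ≥ 2·rad(G) − 4δ − 1. -/
/-- The radius: the minimum eccentricity. -/
noncomputable def graphRad {V : Type*} [Fintype V] [Nonempty V] (G : SimpleGraph V) : ℕ :=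
  Finset.univ.inf' Finset.univ_nonempty (graphEcc G)

/-- The diameter: the maximum eccentricity. -/
noncomputable def graphDiam {V : Type*} [Fintype V] (G : SimpleGraph V) : ℕ :=
  Finset.univ.sup (graphEcc G)


/-- `G` is `δ`-hyperbolic: for any four vertices, the two larger of the three distance sums
differ by at most `2δ` (four-point condition). -/
def IsHyperbolic {V : Type*} (G : SimpleGraph V) (δ : ℝ) : Prop :=
  ∀ u v x y : V,
    (G.dist u v : ℝ) + (G.dist x y : ℝ) ≤
      max ((G.dist u x : ℝ) + (G.dist v y : ℝ)) ((G.dist u y : ℝ) + (G.dist v x : ℝ)) + 2 * δ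

open Finset

namespace SimpleGraph

variable {V : Type*} {G : SimpleGraph V}

lemma Connected.exists_dist_le_and_dist_le_sub (hG : G.Connected) (x y : V) (k : ℕ) :
    ∃ c, G.dist x c ≤ k ∧ G.dist c y ≤ G.dist x y - k := by
  obtain ⟨p, hp⟩ := hG.exists_walk_length_eq_dist x y
  refine ⟨p.getVert k, ?_, ?_⟩
  · exact (dist_le (p.take k)).trans (by simp only [Walk.take_length, inf_le_left])
  · exact (dist_le (p.drop k)).trans (by rw [Walk.drop_length, hp])

end SimpleGraph

section Eccentricity

variable {V : Type*} [Fintype V] (G : SimpleGraph V)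

lemma dist_le_graphEcc (u v : V) : G.dist u v ≤ graphEcc G u :=
  le_sup (f := G.dist u) (mem_univ v)

lemma graphEcc_le_graphDiam (u : V) : graphEcc G u ≤ graphDiam G :=
  le_sup (f := graphEcc G) (mem_univ u)

lemma dist_le_graphDiam (u v : V) : G.dist u v ≤ graphDiam G :=
  (dist_le_graphEcc G u v).trans (graphEcc_le_graphDiam G u)

variable [Nonempty V]

lemma exists_dist_eq_graphEcc (u : V) : ∃ v, G.dist u v = graphEcc G u :=
  let ⟨v, _, hv⟩ := exists_mem_eq_sup univ univ_nonempty (G.dist u)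
  ⟨v, hv.symm⟩

lemma exists_dist_eq_graphDiam : ∃ u v, G.dist u v = graphDiam G := by
  obtain ⟨u, _, hu⟩ := exists_mem_eq_sup univ univ_nonempty (graphEcc G)
  obtain ⟨v, hv⟩ := exists_dist_eq_graphEcc G u
  exact ⟨u, v, hv.trans hu.symm⟩

lemma graphRad_le_graphEcc (u : V) : graphRad G ≤ graphEcc G u :=
  inf'_le (graphEcc G) (mem_univ u)

end Eccentricity

lemma IsHyperbolic.graphEcc_le_max_add {V : Type*} [Fintype V] [Nonempty V]
    {G : SimpleGraph V} {δ : ℝ} (hyp : IsHyperbolic G δ) {x y : V}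
    (hxy : G.dist x y = graphDiam G) (c : V) :
    (graphEcc G c : ℝ) ≤ (max (G.dist x c) (G.dist y c) : ℕ) + 2 * δ := by
  obtain ⟨w, hw⟩ := exists_dist_eq_graphEcc G c
  set m : ℝ := ((max (G.dist x c) (G.dist y c) : ℕ) : ℝ)
  have hxc : (G.dist x c : ℝ) ≤ m := Nat.cast_le.mpr (le_max_left _ _)
  have hyc : (G.dist y c : ℝ) ≤ m := Nat.cast_le.mpr (le_max_right _ _)
  have hyw : (G.dist y w : ℝ) ≤ graphDiam G := by exact_mod_cast dist_le_graphDiam G y w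
  have hxw : (G.dist x w : ℝ) ≤ graphDiam G := by exact_mod_cast dist_le_graphDiam G x w
  have hfour := hyp x y c w
  rw [hxy, hw] at hfour
  have := max_le (add_le_add hxc hyw) ((add_le_add hxw hyc).trans_eq (add_comm _ _))
  linarith

theorem hyperbolic_diam_ge_two_rad_general {V : Type*} [Fintype V] [Nonempty V] (G : SimpleGraph V)
    (hG : G.Connected) (δ : ℝ) (hyp : IsHyperbolic G δ) :
    (graphDiam G : ℝ) ≥ 2 * (graphRad G : ℝ) - 4 * δ - 1 := by
  obtain ⟨x, y, hxy⟩ := exists_dist_eq_graphDiam G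
  set k := (graphDiam G + 1) / 2
  obtain ⟨c, hxc, hcy⟩ := hG.exists_dist_le_and_dist_le_sub x y k
  have hmax : max (G.dist x c) (G.dist y c) ≤ k := max_le hxc (by rw [G.dist_comm]; omega)
  have hrad : (graphRad G : ℝ) ≤ k + 2 * δ :=
    calc (graphRad G : ℝ) ≤ graphEcc G c := by exact_mod_cast graphRad_le_graphEcc G c
      _ ≤ (max (G.dist x c) (G.dist y c) : ℕ) + 2 * δ := hyp.graphEcc_le_max_add hxy c
      _ ≤ k + 2 * δ := by gcongr
  have hk : (2 * k : ℝ) ≤ graphDiam G + 1 := by exact_mod_cast (by omega : 2 * k ≤ graphDiam G + 1)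
  linarith

theorem hyperbolic_diam_ge_two_rad {V : Type*} [Fintype V] [Nonempty V] (G : SimpleGraph V)
    (hG : G.Connected) (δ : ℝ) (hδ : 0 ≤ δ) (hyp : IsHyperbolic G δ) :
    (graphDiam G : ℝ) ≥ 2 * (graphRad G : ℝ) - 4 * δ - 1 :=
  hyperbolic_diam_ge_two_rad_general G hG δ hyp
end

section
/- Let G be a finite connected δ-hyperbolic simple graph. Let u₁ be any vertex, let a₁ be a vertex furthest from u₁ (d(u₁,a₁) = e(u₁)), let a₂ be a vertex furthest from a₁ (d(a₁,a₂) = e(a₁)), and let u₃ be a middle vertex of a shortest (a₁,a₂)-path, i.e., d(a₁,u₃) + d(u₃,a₂) = d(a₁,a₂) and d(a₁,u₃) = ⌊d(a₁,a₂)/2⌋. Then d(a₁,a₂) ≥ diam(G) − 2δ and e(u₃) ≤ rad(G) + 3δ. -/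
/-!
Write `D = d(a₁,a₂)`. The four-point condition for `x, y, u₁, a₁` bounds
`d(x,y) + e(u₁)` by `e(u₁) + e(a₁) + 2δ`, so every distance is at most `D + 2δ`.
For the midpoint `u₃` (with `d(a₁,u₃) = ⌊D/2⌋` and `d(u₃,a₂) = ⌈D/2⌉ ≤ rad`), the four-point
condition for `u₃, c, a₁, a₂` with a center `c` gives `d(u₃,c) ≤ rad + 2δ - ⌊D/2⌋`; for
`u₃, v, a₁, a₂` with `v` furthest from `u₃` it gives either `d(u₃,v) ≤ ⌈D/2⌉ + 2δ` or
`d(u₃,v) ≤ ⌊D/2⌋ + 4δ`. In the second case, averaging with `d(u₃,v) ≤ d(u₃,c) + rad` cancels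
`⌊D/2⌋` and leaves `d(u₃,v) ≤ rad + 3δ`.
-/

namespace SimpleGraph

section Eccentricity

variable {V : Type*} [Fintype V] (G : SimpleGraph V)

theorem dist_le_graphEcc (u v : V) : G.dist u v ≤ graphEcc G u :=
  Finset.le_sup (Finset.mem_univ v)

theorem exists_dist_eq_graphEcc [Nonempty V] (u : V) : ∃ v, G.dist u v = graphEcc G u := by
  obtain ⟨v, -, hv⟩ := Finset.exists_mem_eq_sup Finset.univ Finset.univ_nonempty (G.dist u)
  exact ⟨v, hv.symm⟩

theorem exists_graphEcc_eq_graphRad [Nonempty V] : ∃ c, graphEcc G c = graphRad G := by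
  obtain ⟨c, -, hc⟩ := Finset.exists_mem_eq_inf' Finset.univ_nonempty (graphEcc G)
  exact ⟨c, hc.symm⟩

theorem exists_dist_eq_graphDiam [Nonempty V] : ∃ x y, G.dist x y = graphDiam G := by
  obtain ⟨x, -, hx⟩ := Finset.exists_mem_eq_sup Finset.univ Finset.univ_nonempty (graphEcc G)
  obtain ⟨y, hy⟩ := G.exists_dist_eq_graphEcc x
  exact ⟨x, y, by rw [hy, graphDiam, hx]⟩

theorem dist_le_graphDiam (x y : V) : G.dist x y ≤ graphDiam G :=
  (G.dist_le_graphEcc x y).trans (Finset.le_sup (f := graphEcc G) (Finset.mem_univ x))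

theorem Connected.dist_le_two_mul_graphRad [Nonempty V] {G : SimpleGraph V} (hG : G.Connected)
    (x y : V) : G.dist x y ≤ 2 * graphRad G := by
  obtain ⟨c, hc⟩ := G.exists_graphEcc_eq_graphRad
  have hxc : G.dist x c ≤ graphRad G := dist_comm (G := G) ▸ hc ▸ G.dist_le_graphEcc c x
  have hcy : G.dist c y ≤ graphRad G := hc ▸ G.dist_le_graphEcc c y
  have := hG.dist_triangle (u := x) (v := c) (w := y)
  omega

end Eccentricity

end SimpleGraph

namespace IsHyperbolic

open SimpleGraph

variable {V : Type*} {G : SimpleGraph V} {δ : ℝ}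

theorem nonneg [Nonempty V] (hyp : IsHyperbolic G δ) : 0 ≤ δ := by
  obtain ⟨u⟩ := ‹Nonempty V›
  simpa using hyp u u u u

theorem dist_add_dist_le_or (hyp : IsHyperbolic G δ) (u v x y : V) :
    (G.dist u v + G.dist x y : ℝ) ≤ G.dist u x + G.dist v y + 2 * δ ∨
      (G.dist u v + G.dist x y : ℝ) ≤ G.dist u y + G.dist v x + 2 * δ := by
  rw [← le_max_iff, max_add_add_right]
  exact hyp u v x y

theorem dist_add_dist_le (hyp : IsHyperbolic G δ) {u v x y : V} {s : ℝ}
    (h₁ : (G.dist u x + G.dist v y : ℝ) ≤ s) (h₂ : (G.dist u y + G.dist v x : ℝ) ≤ s) :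
    (G.dist u v + G.dist x y : ℝ) ≤ s + 2 * δ := by
  rcases hyp.dist_add_dist_le_or u v x y with h | h <;> linarith

variable [Fintype V] {u₁ a₁ a₂ u₃ : V}

theorem dist_le_of_sweeps (hyp : IsHyperbolic G δ) (ha₁ : G.dist u₁ a₁ = graphEcc G u₁)
    (ha₂ : G.dist a₁ a₂ = graphEcc G a₁) (x y : V) :
    (G.dist x y : ℝ) ≤ G.dist a₁ a₂ + 2 * δ := by
  have hu₁ : ∀ z, (G.dist z u₁ : ℝ) ≤ G.dist u₁ a₁ := fun z => by
    exact_mod_cast dist_comm (G := G) ▸ ha₁ ▸ G.dist_le_graphEcc u₁ z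
  have ha₁' : ∀ z, (G.dist z a₁ : ℝ) ≤ G.dist a₁ a₂ := fun z => by
    exact_mod_cast dist_comm (G := G) ▸ ha₂ ▸ G.dist_le_graphEcc a₁ z
  have := hyp.dist_add_dist_le (u := x) (v := y) (x := u₁) (y := a₁)
    (s := G.dist u₁ a₁ + G.dist a₁ a₂)
    (by linarith [hu₁ x, ha₁' y]) (by linarith [ha₁' x, hu₁ y])
  linarith

theorem graphDiam_le_of_sweeps [Nonempty V] (hyp : IsHyperbolic G δ)
    (ha₁ : G.dist u₁ a₁ = graphEcc G u₁) (ha₂ : G.dist a₁ a₂ = graphEcc G a₁) :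
    (graphDiam G : ℝ) ≤ G.dist a₁ a₂ + 2 * δ := by
  obtain ⟨x, y, hxy⟩ := G.exists_dist_eq_graphDiam
  exact hxy ▸ hyp.dist_le_of_sweeps ha₁ ha₂ x y

theorem dist_add_dist_le_graphEcc (hyp : IsHyperbolic G δ)
    (hu₃ : G.dist a₁ u₃ + G.dist u₃ a₂ = G.dist a₁ a₂) (hle : G.dist a₁ u₃ ≤ G.dist u₃ a₂)
    (c : V) : (G.dist u₃ c + G.dist a₁ u₃ : ℝ) ≤ graphEcc G c + 2 * δ := by
  have hca₁ : (G.dist c a₁ : ℝ) ≤ graphEcc G c := by exact_mod_cast G.dist_le_graphEcc c a₁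
  have hca₂ : (G.dist c a₂ : ℝ) ≤ graphEcc G c := by exact_mod_cast G.dist_le_graphEcc c a₂
  have hle' : (G.dist a₁ u₃ : ℝ) ≤ G.dist u₃ a₂ := by exact_mod_cast hle
  have hu₃' : (G.dist a₁ u₃ + G.dist u₃ a₂ : ℝ) = G.dist a₁ a₂ := by exact_mod_cast hu₃
  have := hyp.dist_add_dist_le (u := u₃) (v := c) (x := a₁) (y := a₂)
    (s := G.dist u₃ a₂ + graphEcc G c)
    (by rw [dist_comm]; linarith) (by linarith)
  linarith

theorem graphEcc_le_of_midpoint [Nonempty V] (hG : G.Connected) (hyp : IsHyperbolic G δ)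
    (ha₂ : G.dist a₁ a₂ = graphEcc G a₁) (hdiam : (graphDiam G : ℝ) ≤ G.dist a₁ a₂ + 2 * δ)
    (hu₃ : G.dist a₁ u₃ + G.dist u₃ a₂ = G.dist a₁ a₂)
    (hmid : G.dist a₁ u₃ = G.dist a₁ a₂ / 2) :
    (graphEcc G u₃ : ℝ) ≤ graphRad G + 3 * δ := by
  obtain ⟨c, hc⟩ := G.exists_graphEcc_eq_graphRad
  obtain ⟨v, hv⟩ := G.exists_dist_eq_graphEcc u₃
  have hδ := hyp.nonneg
  have hD := hG.dist_le_two_mul_graphRad a₁ a₂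
  have hle : G.dist a₁ u₃ ≤ G.dist u₃ a₂ := by omega
  have hfar : (G.dist u₃ a₂ : ℝ) ≤ graphRad G := by exact_mod_cast (by omega)
  have hu₃' : (G.dist a₁ u₃ + G.dist u₃ a₂ : ℝ) = G.dist a₁ a₂ := by exact_mod_cast hu₃
  have hcenter : (G.dist u₃ c + G.dist a₁ u₃ : ℝ) ≤ graphRad G + 2 * δ :=
    hc ▸ hyp.dist_add_dist_le_graphEcc hu₃ hle c
  have hvia : (G.dist u₃ v : ℝ) ≤ G.dist u₃ c + graphRad G := by
    have : G.dist u₃ v ≤ G.dist u₃ c + G.dist c v := hG.dist_triangle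
    have : G.dist c v ≤ graphRad G := hc ▸ G.dist_le_graphEcc c v
    exact_mod_cast (by omega)
  have hva₁ : (G.dist v a₁ : ℝ) ≤ G.dist a₁ a₂ := by
    exact_mod_cast dist_comm (G := G) ▸ ha₂ ▸ G.dist_le_graphEcc a₁ v
  have hva₂ : (G.dist v a₂ : ℝ) ≤ graphDiam G := by exact_mod_cast G.dist_le_graphDiam v a₂
  have hu₃a₁ : (G.dist u₃ a₁ : ℝ) = G.dist a₁ u₃ := by rw [dist_comm]
  rw [← hv]
  rcases hyp.dist_add_dist_le_or u₃ v a₁ a₂ with h | h <;> linarith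

end IsHyperbolic

theorem hyperbolic_two_sweeps_general {V : Type*} [Fintype V] [Nonempty V] (G : SimpleGraph V)
    (hG : G.Connected) (δ : ℝ) (hyp : IsHyperbolic G δ)
    (u₁ a₁ a₂ u₃ : V)
    (ha₁ : G.dist u₁ a₁ = graphEcc G u₁)
    (ha₂ : G.dist a₁ a₂ = graphEcc G a₁)
    (hu₃ : G.dist a₁ u₃ + G.dist u₃ a₂ = G.dist a₁ a₂)
    (hmid : G.dist a₁ u₃ = G.dist a₁ a₂ / 2) :
    (G.dist a₁ a₂ : ℝ) ≥ (graphDiam G : ℝ) - 2 * δ ∧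
    (graphEcc G u₃ : ℝ) ≤ (graphRad G : ℝ) + 3 * δ := by
  have hdiam := hyp.graphDiam_le_of_sweeps ha₁ ha₂
  exact ⟨by linarith, hyp.graphEcc_le_of_midpoint hG ha₂ hdiam hu₃ hmid⟩

theorem hyperbolic_two_sweeps {V : Type*} [Fintype V] [Nonempty V] (G : SimpleGraph V)
    (hG : G.Connected) (δ : ℝ) (hδ : 0 ≤ δ) (hyp : IsHyperbolic G δ)
    (u₁ a₁ a₂ u₃ : V)
    (ha₁ : G.dist u₁ a₁ = graphEcc G u₁)
    (ha₂ : G.dist a₁ a₂ = graphEcc G a₁)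
    (hu₃ : G.dist a₁ u₃ + G.dist u₃ a₂ = G.dist a₁ a₂)
    (hmid : G.dist a₁ u₃ = G.dist a₁ a₂ / 2) :
    (G.dist a₁ a₂ : ℝ) ≥ (graphDiam G : ℝ) - 2 * δ ∧
    (graphEcc G u₃ : ℝ) ≤ (graphRad G : ℝ) + 3 * δ :=
  hyperbolic_two_sweeps_general G hG δ hyp u₁ a₁ a₂ u₃ ha₁ ha₂ hu₃ hmid
end
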